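/- arXiv:math/0410349 — 2 statements merged into one kernel-verified Lean document; each statement's English description precedes it below -/
import Mathlib

section
/- Let k be a field and I = ⟨x+y, x² + t·x + t⟩ ⊆ k[x,y,t]. Then t is not a zero divisor in the quotient ring k[x,y,t]/I; consequently k[x,y,t]/I is a flat k[t]-module. -/
open MvPolynomial

/-- The ideal `⟨x + y, x² + t·x + t⟩` in `k[x,y,t]`, where `x = X 0`, `y = X 1`, `t = X 2`. -/
noncomputable def idealI (k : Type) [Field k] : Ideal (MvPolynomial (Fin 3) k) :=
  Ideal.span {X 0 + X 1, X 0 ^ 2 + X 2 * X 0 + X 2}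

/-- The structure of a `k[t]`-algebra on `k[x,y,t]/I` via `t ↦ t`. -/
noncomputable def structureMap (k : Type) [Field k] :
    Polynomial k →+* MvPolynomial (Fin 3) k ⧸ idealI k :=
  (Ideal.Quotient.mk (idealI k)).comp
    (Polynomial.aeval (X 2 : MvPolynomial (Fin 3) k)).toRingHom

section Aux

variable (k : Type) [Field k]

/-- The polynomial `X² + t·X + t` over `k[t]`. -/
noncomputable def auxPoly : Polynomial (Polynomial k) :=
  Polynomial.X ^ 2 + (Polynomial.C Polynomial.X * Polynomial.X + Polynomial.C Polynomial.X)

lemma auxPoly_monic : (auxPoly k).Monic := by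
  apply Polynomial.monic_X_pow_add
  have hle : (Polynomial.C Polynomial.X * Polynomial.X
      + Polynomial.C (Polynomial.X : Polynomial k)).degree ≤ 1 := by
    apply le_trans (Polynomial.degree_add_le _ _)
    apply max_le
    · apply le_trans (Polynomial.degree_mul_le _ _)
      have h1 : (Polynomial.C (Polynomial.X : Polynomial k)).degree ≤ 0 :=
        Polynomial.degree_C_le
      have h2 : (Polynomial.X : Polynomial (Polynomial k)).degree ≤ 1 :=
        Polynomial.degree_X_le
      calc (Polynomial.C (Polynomial.X : Polynomial k)).degree
            + (Polynomial.X : Polynomial (Polynomial k)).degree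
          ≤ 0 + 1 := add_le_add h1 h2
        _ ≤ 1 := by norm_num
    · exact le_trans Polynomial.degree_C_le (by norm_num)
  refine lt_of_le_of_lt hle ?_
  norm_num

/-- `k[t][x]/(x² + t x + t)`. -/
noncomputable abbrev AuxRing := AdjoinRoot (auxPoly k)

noncomputable def phi : MvPolynomial (Fin 3) k →+* AuxRing k :=
  (MvPolynomial.aeval
    (fun i => ![AdjoinRoot.root (auxPoly k), -AdjoinRoot.root (auxPoly k),
      algebraMap (Polynomial k) (AuxRing k) Polynomial.X] i)).toRingHom

lemma phi_rel : AdjoinRoot.root (auxPoly k) ^ 2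
    + algebraMap (Polynomial k) (AuxRing k) Polynomial.X * AdjoinRoot.root (auxPoly k)
    + algebraMap (Polynomial k) (AuxRing k) Polynomial.X = 0 := by
  have h := AdjoinRoot.mk_self (f := auxPoly k)
  rw [auxPoly] at h
  simp [map_add, map_mul, map_pow, AdjoinRoot.mk_X, AdjoinRoot.mk_C,
    AdjoinRoot.algebraMap_eq, add_assoc] at h ⊢
  exact h

lemma span_le_ker : idealI k ≤ RingHom.ker (phi k) := by
  rw [idealI, Ideal.span_le]
  rintro p hp
  simp only [Set.mem_insert_iff, Set.mem_singleton_iff] at hp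
  rcases hp with rfl | rfl <;>
    simp only [SetLike.mem_coe, RingHom.mem_ker, phi, AlgHom.toRingHom_eq_coe,
      RingHom.coe_coe, map_add, map_mul, map_pow, aeval_X]
  · simp
  · simpa [Matrix.cons_val_zero, Matrix.cons_val_one] using phi_rel k

noncomputable def phi' : (MvPolynomial (Fin 3) k ⧸ idealI k) →+* AuxRing k :=
  Ideal.Quotient.lift (idealI k) (phi k) (fun a ha => span_le_ker k ha)

lemma structureMap_X : structureMap k Polynomial.X
    = Ideal.Quotient.mk (idealI k) (X 2) := by
  simp [structureMap]

lemma structureMap_C (a : k) : structureMap k (Polynomial.C a)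
    = Ideal.Quotient.mk (idealI k) (C a) := by
  simp [structureMap, algebraMap_eq]

lemma eval₂_aux : (auxPoly k).eval₂ (structureMap k)
    (Ideal.Quotient.mk (idealI k) (X 0)) = 0 := by
  rw [auxPoly]
  simp only [Polynomial.eval₂_add, Polynomial.eval₂_mul, Polynomial.eval₂_pow,
    Polynomial.eval₂_X, Polynomial.eval₂_C, structureMap_X]
  rw [← map_pow, ← map_mul, ← map_add, ← map_add, Ideal.Quotient.eq_zero_iff_mem]
  have heq : (X 0 ^ 2 + (X 2 * X 0 + X 2) : MvPolynomial (Fin 3) k)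
      = X 0 ^ 2 + X 2 * X 0 + X 2 := by ring
  rw [heq, idealI]
  exact Ideal.subset_span (Or.inr rfl)

noncomputable def psi : AuxRing k →+* (MvPolynomial (Fin 3) k ⧸ idealI k) :=
  AdjoinRoot.lift (structureMap k) (Ideal.Quotient.mk (idealI k) (X 0)) (eval₂_aux k)

lemma psi_comp_phi' : (psi k).comp (phi' k) = RingHom.id _ := by
  apply Ideal.Quotient.ringHom_ext
  apply MvPolynomial.ringHom_ext
  · intro a
    simp only [RingHom.comp_apply, RingHom.coe_comp, Function.comp_apply,
      RingHom.id_apply]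
    have h1 : phi' k (Ideal.Quotient.mk (idealI k) (MvPolynomial.C a))
        = AdjoinRoot.of (auxPoly k) (Polynomial.C a) := by
      simp only [phi', Ideal.Quotient.lift_mk, phi, AlgHom.toRingHom_eq_coe,
        RingHom.coe_coe, aeval_C]
      rw [IsScalarTower.algebraMap_apply k (Polynomial k) (AuxRing k),
        Polynomial.algebraMap_eq, AdjoinRoot.algebraMap_eq]
    rw [h1]
    rw [show psi k (AdjoinRoot.of (auxPoly k) (Polynomial.C a))
        = structureMap k (Polynomial.C a) from AdjoinRoot.lift_of (eval₂_aux k)]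
    rw [structureMap_C]
  · intro i
    simp only [RingHom.comp_apply, RingHom.coe_comp, Function.comp_apply,
      RingHom.id_apply, phi', Ideal.Quotient.lift_mk, phi,
      AlgHom.toRingHom_eq_coe, RingHom.coe_coe, aeval_X]
    fin_cases i
    · simp only [Fin.isValue, Matrix.cons_val_zero]
      exact AdjoinRoot.lift_root (eval₂_aux k)
    · show psi k (-AdjoinRoot.root (auxPoly k)) = Ideal.Quotient.mk (idealI k) (X 1)
      rw [map_neg]
      rw [show psi k (AdjoinRoot.root (auxPoly k))
          = Ideal.Quotient.mk (idealI k) (X 0) from AdjoinRoot.lift_root (eval₂_aux k)]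
      rw [eq_comm, ← sub_eq_zero, sub_neg_eq_add,
        ← (Ideal.Quotient.mk (idealI k)).map_add, add_comm,
        Ideal.Quotient.eq_zero_iff_mem, idealI]
      exact Ideal.subset_span (Or.inl rfl)
    · show psi k (AdjoinRoot.of (auxPoly k) Polynomial.X)
          = Ideal.Quotient.mk (idealI k) (X 2)
      rw [show psi k (AdjoinRoot.of (auxPoly k) Polynomial.X)
          = structureMap k Polynomial.X from AdjoinRoot.lift_of (eval₂_aux k)]
      rw [structureMap_X]

lemma phi'_comp_structureMap :
    (phi' k).comp (structureMap k) = algebraMap (Polynomial k) (AuxRing k) := by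
  apply Polynomial.ringHom_ext
  · intro a
    rw [RingHom.comp_apply, structureMap_C]
    simp only [phi', Ideal.Quotient.lift_mk, phi, AlgHom.toRingHom_eq_coe,
      RingHom.coe_coe, aeval_C]
    rw [IsScalarTower.algebraMap_apply k (Polynomial k) (AuxRing k),
      Polynomial.algebraMap_eq]
  · rw [RingHom.comp_apply, structureMap_X]
    simp only [phi', Ideal.Quotient.lift_mk, phi, AlgHom.toRingHom_eq_coe,
      RingHom.coe_coe, aeval_X]
    simp [AdjoinRoot.algebraMap_eq]

lemma phi'_structureMap (p : Polynomial k) :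
    phi' k (structureMap k p) = algebraMap (Polynomial k) (AuxRing k) p :=
  DFunLike.congr_fun (phi'_comp_structureMap k) p

lemma phi'_comp_psi : ((phi' k)).comp (psi k) = RingHom.id _ := by
  have hmk : Function.Surjective (AdjoinRoot.mk (auxPoly k)) :=
    Ideal.Quotient.mk_surjective
  have key : (((phi' k)).comp (psi k)).comp (AdjoinRoot.mk (auxPoly k))
      = AdjoinRoot.mk (auxPoly k) := by
    apply Polynomial.ringHom_ext
    · intro r
      simp only [RingHom.comp_apply, AdjoinRoot.mk_C]
      have h2 : psi k (algebraMap (Polynomial k) (AuxRing k) r)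
          = structureMap k r := by
        rw [AdjoinRoot.algebraMap_eq]
        exact AdjoinRoot.lift_of (eval₂_aux k)
      rw [← AdjoinRoot.algebraMap_eq, h2, phi'_structureMap]
    · simp only [RingHom.comp_apply, AdjoinRoot.mk_X]
      rw [show psi k (AdjoinRoot.root (auxPoly k))
          = Ideal.Quotient.mk (idealI k) (X 0) from AdjoinRoot.lift_root (eval₂_aux k)]
      simp [phi', phi]
  refine RingHom.ext fun x => ?_
  obtain ⟨p, rfl⟩ := hmk x
  rw [RingHom.comp_apply, RingHom.id_apply, ← RingHom.comp_apply,
    ← RingHom.comp_apply ((phi' k).comp (psi k)), key]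

instance : NoZeroSMulDivisors (Polynomial k) (AuxRing k) :=
  by have := (AdjoinRoot.powerBasis' (auxPoly_monic k)).basis.isTorsionFree
     exact ⟨fun h => smul_eq_zero.mp h⟩

instance : Module.Free (Polynomial k) (AuxRing k) :=
  Module.Free.of_basis (AdjoinRoot.powerBasis' (auxPoly_monic k)).basis

end Aux

theorem t_nonZeroDivisor_and_flat (k : Type) [Field k] :
    Ideal.Quotient.mk (idealI k) (X 2) ∈
        nonZeroDivisors (MvPolynomial (Fin 3) k ⧸ idealI k) ∧
      @Module.Flat (Polynomial k) (MvPolynomial (Fin 3) k ⧸ idealI k) _ _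
        ((structureMap k).toAlgebra.toModule) := by
  letI alg : Algebra (Polynomial k) (MvPolynomial (Fin 3) k ⧸ idealI k) :=
    (structureMap k).toAlgebra
  have halg : algebraMap (Polynomial k) (MvPolynomial (Fin 3) k ⧸ idealI k)
      = structureMap k := rfl
  have hinj : Function.Injective (phi' k) := by
    intro a b hab
    have := congrArg (fun f => f a) (psi_comp_phi' k)
    have h2 := congrArg (fun f => f b) (psi_comp_phi' k)
    simp only [RingHom.comp_apply, RingHom.id_apply] at this h2
    rw [← this, ← h2, hab]
  have hsm : ∀ (p : Polynomial k) (a : MvPolynomial (Fin 3) k ⧸ idealI k),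
      phi' k (p • a) = p • phi' k a := by
    intro p a
    rw [Algebra.smul_def, Algebra.smul_def, map_mul, halg, phi'_structureMap]
  constructor
  · rw [mem_nonZeroDivisors_iff_right]
    intro a ha
    apply hinj
    rw [map_zero]
    have h1 : phi' k a * algebraMap (Polynomial k) (AuxRing k) Polynomial.X = 0 := by
      have h0 := congrArg (phi' k) ha
      rwa [map_mul, map_zero, ← structureMap_X, phi'_structureMap] at h0
    have h2 : (Polynomial.X : Polynomial k) • phi' k a = 0 := by
      rw [Algebra.smul_def, mul_comm]; exact h1
    rcases smul_eq_zero.mp h2 with h | h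
    · exact absurd h Polynomial.X_ne_zero
    · exact h
  · letI e : (MvPolynomial (Fin 3) k ⧸ idealI k) ≃ₗ[Polynomial k] AuxRing k :=
      { toFun := phi' k
        invFun := psi k
        left_inv := fun a => by
          have := congrArg (fun f => f a) (psi_comp_phi' k)
          simpa using this
        right_inv := fun a => by
          have := congrArg (fun f => f a) (phi'_comp_psi k)
          simpa using this
        map_add' := (phi' k).map_add
        map_smul' := hsm }
    exact Module.Flat.of_linearEquiv e
end

section
/- Let k be a field of characteristic zero, R̂ = k[[x,y]]/⟨y² − x² − x³⟩, and M̂ = k[[x,y]]/⟨x + y, x²⟩ viewed as an R̂-module. With ξ = x√(1+x) − y and η = x√(1+x) + y, we have M̂ ≅ R̂/⟨ξ², η⟩ as R̂-modules, and M̂ has length two over R̂. -/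
open MvPowerSeries

/-- The ideal `⟨y² − x² − x³⟩` in `k[[x,y]]`, where `x = X 0`, `y = X 1`. -/
noncomputable def nodalIdeal (k : Type) [Field k] : Ideal (MvPowerSeries (Fin 2) k) :=
  Ideal.span {(X 1 : MvPowerSeries (Fin 2) k) ^ 2 - X 0 ^ 2 - X 0 ^ 3}

/-- The ideal `⟨x + y, x²⟩` in `k[[x,y]]`. -/
noncomputable def stringIdeal (k : Type) [Field k] : Ideal (MvPowerSeries (Fin 2) k) :=
  Ideal.span {(X 0 : MvPowerSeries (Fin 2) k) + X 1, X 0 ^ 2}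

/-- `R̂ = k[[x,y]]/⟨y² − x² − x³⟩`. -/
noncomputable abbrev Rhat (k : Type) [Field k] : Type :=
  MvPowerSeries (Fin 2) k ⧸ nodalIdeal k

/-- `M̂ = k[[x,y]]/⟨x + y, x²⟩`. -/
noncomputable abbrev Mhat (k : Type) [Field k] : Type :=
  MvPowerSeries (Fin 2) k ⧸ stringIdeal k

lemma nodalIdeal_le_stringIdeal (k : Type) [Field k] : nodalIdeal k ≤ stringIdeal k := by
  rw [nodalIdeal, Ideal.span_le, Set.singleton_subset_iff, SetLike.mem_coe, stringIdeal,
    Ideal.mem_span_pair]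
  exact ⟨X 1 - X 0, -(X 0 : MvPowerSeries (Fin 2) k), by ring⟩

/-- `M̂` is an `R̂`-module via the natural surjection `R̂ → M̂`. -/
noncomputable instance (k : Type) [Field k] : Module (Rhat k) (Mhat k) :=
  Module.compHom _ (Ideal.Quotient.factor (S := nodalIdeal k) (T := stringIdeal k)
    (nodalIdeal_le_stringIdeal k))

/-! ### Auxiliary lemmas -/

section Aux

variable {k : Type} [Field k]

/-- Any power series in two variables with zero constant coefficient can be written
as `X 0 * a + X 1 * b`. -/
lemma exists_decomp (f : MvPowerSeries (Fin 2) k)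
    (hf : constantCoeff (σ := Fin 2) (R := k) f = 0) :
    ∃ a b : MvPowerSeries (Fin 2) k, f = X 0 * a + X 1 * b := by
  classical
  refine ⟨fun m => if m 1 = 0 then coeff (R := k) (m + Finsupp.single 0 1) f else 0,
          fun m => coeff (R := k) (m + Finsupp.single 1 1) f, ?_⟩
  ext m
  rw [map_add, X, X]
  erw [coeff_monomial_mul, coeff_monomial_mul]
  have hca : ∀ (g : (Fin 2 →₀ ℕ) → k) (n : Fin 2 →₀ ℕ), coeff (R := k) n g = g n := fun _ _ => rfl
  simp only [coeff_apply, hca, one_mul]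
  have ht0 : (m - Finsupp.single 0 1 : Fin 2 →₀ ℕ) 1 = m 1 := by
    rw [Finsupp.tsub_apply, Finsupp.single_apply]; simp
  split_ifs with h0 hc h1 h1' h1''
  · rw [ht0] at hc
    rw [Finsupp.single_le_iff] at h1
    omega
  · rw [tsub_add_cancel_of_le h0]; simp
  · rw [tsub_add_cancel_of_le h1']; simp
  · rw [ht0] at hc
    rw [Finsupp.single_le_iff] at h1'
    omega
  · rw [tsub_add_cancel_of_le h1'']; simp
  · rw [Finsupp.single_le_iff] at h0 h1''
    have hm : m = 0 := by ext i; fin_cases i <;> simp <;> omega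
    rw [hm, add_zero]; exact hf

lemma constantCoeff_of_mem {f : MvPowerSeries (Fin 2) k} (hf : f ∈ stringIdeal k) :
    constantCoeff (σ := Fin 2) (R := k) f = 0 := by
  rw [stringIdeal, Ideal.mem_span_pair] at hf
  obtain ⟨p, q, rfl⟩ := hf
  simp

lemma coeff_single_of_mem {f : MvPowerSeries (Fin 2) k} (hf : f ∈ stringIdeal k) :
    coeff (R := k) (Finsupp.single 0 1) f = coeff (R := k) (Finsupp.single 1 1) f := by
  classical
  rw [stringIdeal, Ideal.mem_span_pair] at hf
  obtain ⟨p, q, rfl⟩ := hf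
  have key : ∀ (s t : Fin 2) (p : MvPowerSeries (Fin 2) k),
      coeff (R := k) (Finsupp.single t 1) (p * X s) =
        if s = t then constantCoeff (σ := Fin 2) (R := k) p else 0 := by
    intro s t p
    rw [X, coeff_mul_monomial]
    by_cases h : s = t
    · subst h
      rw [if_pos le_rfl, if_pos rfl, tsub_self, mul_one, coeff_zero_eq_constantCoeff_apply]
    · rw [if_neg h, if_neg]
      rw [Finsupp.single_le_iff, Finsupp.single_apply, if_neg fun hh => h hh.symm]
      omega
  have key2 : ∀ (t : Fin 2) (q : MvPowerSeries (Fin 2) k),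
      coeff (R := k) (Finsupp.single t 1) (q * X 0 ^ 2) = 0 := by
    intro t q
    rw [pow_two, ← mul_assoc, key]
    split <;> simp
  simp [mul_add, key, key2, show (0:Fin 2) ≠ 1 by decide, show (1:Fin 2) ≠ 0 by decide]

lemma X0_not_mem_stringIdeal : (X 0 : MvPowerSeries (Fin 2) k) ∉ stringIdeal k := by
  classical
  intro h
  have := coeff_single_of_mem h
  rw [coeff_X, coeff_X, if_pos rfl, if_neg] at this
  · exact one_ne_zero this
  · intro hs
    have := DFunLike.congr_fun hs (0 : Fin 2)
    simp [Finsupp.single_apply] at this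

/-- Every power series is congruent to `c₀ + c₁ · X 0` modulo the string ideal. -/
lemma exists_normal_form (f : MvPowerSeries (Fin 2) k) :
    ∃ c : k, f - C (σ := Fin 2) (R := k) (constantCoeff (σ := Fin 2) (R := k) f) - C (σ := Fin 2) (R := k) c * X 0
      ∈ stringIdeal k := by
  obtain ⟨a, b, hg⟩ := exists_decomp (f - C (σ := Fin 2) (R := k) (constantCoeff (σ := Fin 2) (R := k) f)) (by simp)
  obtain ⟨a1, a2, hA⟩ := exists_decomp (a - C (σ := Fin 2) (R := k) (constantCoeff (σ := Fin 2) (R := k) a)) (by simp)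
  obtain ⟨b1, b2, hB⟩ := exists_decomp (b - C (σ := Fin 2) (R := k) (constantCoeff (σ := Fin 2) (R := k) b)) (by simp)
  refine ⟨constantCoeff (σ := Fin 2) (R := k) a - constantCoeff (σ := Fin 2) (R := k) b, ?_⟩
  rw [stringIdeal, Ideal.mem_span_pair]
  refine ⟨C (σ := Fin 2) (R := k) (constantCoeff (σ := Fin 2) (R := k) b) + X 0 * (a2 + b1) + (X 1 - X 0) * b2,
    a1 - (a2 + b1) + b2, ?_⟩
  rw [map_sub]
  linear_combination -hg - X 0 * hA - X 1 * hB

/-- The scalar action of `R̂` on `M̂`, explicitly. -/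
lemma mk_smul_mk (a b : MvPowerSeries (Fin 2) k) :
    (Ideal.Quotient.mk (nodalIdeal k) a) • (Ideal.Quotient.mk (stringIdeal k) b : Mhat k) =
      Ideal.Quotient.mk (stringIdeal k) (a * b) := by
  show Ideal.Quotient.factor (S := nodalIdeal k) (T := stringIdeal k) (nodalIdeal_le_stringIdeal k)
      (Ideal.Quotient.mk (nodalIdeal k) a) * Ideal.Quotient.mk (stringIdeal k) b = _
  rw [Ideal.Quotient.factor_mk, ← map_mul]

end Aux

set_option maxHeartbeats 2000000 in
theorem Mhat_iso_and_length_two (k : Type) [Field k] [CharZero k]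
    (u : MvPowerSeries (Fin 2) k) (hu1 : constantCoeff (σ := Fin 2) (R := k) u = 1)
    (hu2 : u ^ 2 = 1 + X 0) :
    (Nonempty (Mhat k ≃ₗ[Rhat k]
        (Rhat k ⧸ (Ideal.span {Ideal.Quotient.mk (nodalIdeal k) (X 0 * u - X 1) ^ 2,
          Ideal.Quotient.mk (nodalIdeal k) (X 0 * u + X 1)} : Ideal (Rhat k))))) ∧
      ∃ N : Submodule (Rhat k) (Mhat k), IsSimpleModule (Rhat k) N ∧
        IsSimpleModule (Rhat k) (Mhat k ⧸ N) := by
  classical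
  set ξ : MvPowerSeries (Fin 2) k := X 0 * u - X 1 with hξ
  set η : MvPowerSeries (Fin 2) k := X 0 * u + X 1 with hη
  -- unit inverses
  obtain ⟨u', huu'⟩ : ∃ u' : MvPowerSeries (Fin 2) k, u * u' = 1 := by
    have : IsUnit u := by
      rw [MvPowerSeries.isUnit_iff_constantCoeff, hu1]; exact isUnit_one
    obtain ⟨w, hw⟩ := this
    exact ⟨↑w⁻¹, by rw [← hw]; simp⟩
  obtain ⟨v, hv⟩ : ∃ v : MvPowerSeries (Fin 2) k, (u + 1) * v = 1 := by
    have : IsUnit (u + 1) := by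
      rw [MvPowerSeries.isUnit_iff_constantCoeff, map_add, hu1, map_one]
      exact isUnit_iff_ne_zero.2 (by norm_num)
    obtain ⟨w, hw⟩ := this
    exact ⟨↑w⁻¹, by rw [← hw]; simp⟩
  have hx : (X 0 : MvPowerSeries (Fin 2) k) = (u - 1) * (u + 1) := by linear_combination -hu2
  have h1 : X 0 * (u - 1) = X 0 ^ 2 * v := by
    linear_combination (-(X 0 * (u - 1))) * hv - (X 0 * v) * hx
  -- the ideal equality
  have Keq : nodalIdeal k ⊔ Ideal.span {ξ ^ 2, η} = stringIdeal k := by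
    apply le_antisymm
    · refine sup_le (nodalIdeal_le_stringIdeal k) ?_
      rw [Ideal.span_le]
      rintro g (rfl | rfl)
      · rw [stringIdeal, SetLike.mem_coe, Ideal.mem_span_pair]
        exact ⟨(X 0 + X 1) - 2 * X 0 * (u + 1), (u + 1) ^ 2, by rw [hξ]; ring⟩
      · rw [stringIdeal, SetLike.mem_coe, Ideal.mem_span_pair]
        exact ⟨1, v, by rw [hη]; linear_combination -h1⟩
    · have hξ2 : ξ ^ 2 ∈ nodalIdeal k ⊔ Ideal.span {ξ ^ 2, η} :=
        Ideal.mem_sup_right (Ideal.subset_span (Set.mem_insert _ _))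
      have hηm : η ∈ nodalIdeal k ⊔ Ideal.span {ξ ^ 2, η} :=
        Ideal.mem_sup_right (Ideal.subset_span (Set.mem_insert_of_mem _ rfl))
      have hξη : ξ * η ∈ nodalIdeal k ⊔ Ideal.span {ξ ^ 2, η} := by
        have h2 : ξ * η = -((X 1 : MvPowerSeries (Fin 2) k) ^ 2 - X 0 ^ 2 - X 0 ^ 3) := by
          rw [hξ, hη]; linear_combination (X 0 ^ 2) * hu2
        rw [h2]
        exact neg_mem (Ideal.mem_sup_left (Ideal.subset_span rfl))
      have h4 : (C (σ := Fin 2) (R := k)) ((4 : k)⁻¹) * 4 = 1 := by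
        have : (4 : MvPowerSeries (Fin 2) k) = C (σ := Fin 2) (R := k) 4 := by simp [map_ofNat]
        rw [this, ← map_mul, inv_mul_cancel₀ (by norm_num : (4:k) ≠ 0), map_one]
      have hx2 : (X 0 : MvPowerSeries (Fin 2) k) ^ 2 ∈ nodalIdeal k ⊔ Ideal.span {ξ ^ 2, η} := by
        have hx2eq : (X 0 : MvPowerSeries (Fin 2) k) ^ 2 =
            (C (σ := Fin 2) (R := k) (4 : k)⁻¹ * u' * u') * ξ ^ 2 +
            ((C (σ := Fin 2) (R := k) (4 : k)⁻¹ * u' * u') * η) * η +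
            (2 * C (σ := Fin 2) (R := k) (4 : k)⁻¹ * u' * u') * (ξ * η) := by
          rw [hξ, hη]
          linear_combination (-(X 0 ^ 2) * (u * u' + 1)) * huu' -
            ((X 0 ^ 2) * (u * u') ^ 2) * h4
        rw [hx2eq]
        exact add_mem (add_mem (Ideal.mul_mem_left _ _ hξ2) (Ideal.mul_mem_left _ _ hηm))
          (Ideal.mul_mem_left _ _ hξη)
      rw [stringIdeal, Ideal.span_le]
      rintro g (rfl | rfl)
      · have heq : (X 0 : MvPowerSeries (Fin 2) k) + X 1 = η - v * X 0 ^ 2 := by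
          rw [hη]; linear_combination -h1
        rw [SetLike.mem_coe, heq]
        exact sub_mem hηm (Ideal.mul_mem_left _ _ hx2)
      · exact hx2
  -- Part 1: the isomorphism
  constructor
  · set S : Ideal (MvPowerSeries (Fin 2) k) := Ideal.span {ξ ^ 2, η} with hS
    set Kb : Ideal (Rhat k) := Ideal.span {Ideal.Quotient.mk (nodalIdeal k) (X 0 * u - X 1) ^ 2,
        Ideal.Quotient.mk (nodalIdeal k) (X 0 * u + X 1)} with hKb
    have hmap : Kb = S.map (Ideal.Quotient.mk (nodalIdeal k)) := by
      rw [hKb, hS, Ideal.map_span, Set.image_insert_eq, Set.image_singleton, map_pow]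
    set e : (Rhat k ⧸ Kb) ≃+* Mhat k :=
      (Ideal.quotEquivOfEq hmap).trans
        ((DoubleQuot.quotQuotEquivQuotSup (nodalIdeal k) S).trans
          (Ideal.quotEquivOfEq Keq)) with he
    have hemk : ∀ a : MvPowerSeries (Fin 2) k, e (Ideal.Quotient.mk _ (Ideal.Quotient.mk (nodalIdeal k) a)) =
        Ideal.Quotient.mk (stringIdeal k) a := by
      intro a
      rw [he]
      simp only [RingEquiv.trans_apply, Ideal.quotEquivOfEq_mk]
      exact congrArg _ (DoubleQuot.quotQuotEquivQuotSup_quotQuotMk (nodalIdeal k) S a)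
    have hsmul : ∀ (r : Rhat k) (m), e (r • m) = r • e m := by
      intro r m
      obtain ⟨a, rfl⟩ := Ideal.Quotient.mk_surjective r
      obtain ⟨ρ, rfl⟩ := Ideal.Quotient.mk_surjective m
      obtain ⟨b, rfl⟩ := Ideal.Quotient.mk_surjective ρ
      have hsm : (Ideal.Quotient.mk (nodalIdeal k) a) •
          (Ideal.Quotient.mk Kb (Ideal.Quotient.mk (nodalIdeal k) b)) =
          Ideal.Quotient.mk Kb (Ideal.Quotient.mk (nodalIdeal k) (a * b)) := rfl
      rw [hsm, hemk, hemk, mk_smul_mk]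
    exact ⟨AddEquiv.toLinearEquiv e.symm.toAddEquiv (by
      intro c x
      apply e.injective
      show e (e.symm (c • x)) = e (c • e.symm x)
      rw [e.apply_symm_apply, hsmul, e.apply_symm_apply])⟩
  -- Part 2: length two
  · set N : Submodule (Rhat k) (Mhat k) :=
      Submodule.span (Rhat k) {Ideal.Quotient.mk (stringIdeal k) (X 0)} with hN
    have memN : ∀ f : MvPowerSeries (Fin 2) k, Ideal.Quotient.mk (stringIdeal k) f ∈ N ↔
        constantCoeff (σ := Fin 2) (R := k) f = 0 := by
      intro f
      constructor
      · intro hf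
        rw [hN, Submodule.mem_span_singleton] at hf
        obtain ⟨r, hr⟩ := hf
        obtain ⟨g, rfl⟩ := Ideal.Quotient.mk_surjective r
        rw [mk_smul_mk, Ideal.Quotient.eq] at hr
        have := constantCoeff_of_mem hr
        simpa using this
      · intro hf
        obtain ⟨c, hc⟩ := exists_normal_form f
        rw [hf, map_zero, sub_zero] at hc
        have : Ideal.Quotient.mk (stringIdeal k) f =
            Ideal.Quotient.mk (nodalIdeal k) (C (σ := Fin 2) (R := k) c) •
              Ideal.Quotient.mk (stringIdeal k) (X 0) := by
          rw [mk_smul_mk, Ideal.Quotient.eq]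
          exact hc
        rw [this]
        exact Submodule.smul_mem _ _ (Submodule.subset_span rfl)
    have hxne : (Ideal.Quotient.mk (stringIdeal k) (X 0) : Mhat k) ≠ 0 := by
      rw [Ne, Ideal.Quotient.eq_zero_iff_mem]
      exact X0_not_mem_stringIdeal
    have hatom : IsAtom N := by
      constructor
      · intro hbot
        exact hxne (by
          have : Ideal.Quotient.mk (stringIdeal k) (X 0) ∈ N :=
            Submodule.subset_span rfl
          rwa [hbot, Submodule.mem_bot] at this)
      · intro b hb
        by_contra hbne
        obtain ⟨p, hpb, hpne⟩ := (Submodule.ne_bot_iff b).1 hbne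
        obtain ⟨f, rfl⟩ := Ideal.Quotient.mk_surjective p
        have hf0 : constantCoeff (σ := Fin 2) (R := k) f = 0 := (memN f).1 (hb.le hpb)
        obtain ⟨c, hc⟩ := exists_normal_form f
        rw [hf0, map_zero, sub_zero] at hc
        have hpc : Ideal.Quotient.mk (stringIdeal k) f =
            Ideal.Quotient.mk (stringIdeal k) (C (σ := Fin 2) (R := k) c * X 0) := by
          rw [Ideal.Quotient.eq]; exact hc
        have hcne : c ≠ 0 := by
          rintro rfl
          apply hpne
          rw [hpc]; simp
        have hxb : Ideal.Quotient.mk (stringIdeal k) (X 0) ∈ b := by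
          have : Ideal.Quotient.mk (nodalIdeal k) (C (σ := Fin 2) (R := k) c⁻¹) •
              Ideal.Quotient.mk (stringIdeal k) f =
              Ideal.Quotient.mk (stringIdeal k) (X 0) := by
            rw [hpc, mk_smul_mk, ← mul_assoc, ← map_mul, inv_mul_cancel₀ hcne, map_one, one_mul]
          rw [← this]
          exact Submodule.smul_mem _ _ hpb
        have : N ≤ b := by
          rw [hN, Submodule.span_le, Set.singleton_subset_iff]
          exact hxb
        exact absurd (lt_of_le_of_lt this hb) (lt_irrefl _)
    have hcoatom : IsCoatom N := by
      constructor
      · intro htop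
        have : Ideal.Quotient.mk (stringIdeal k) 1 ∈ N := htop ▸ Submodule.mem_top
        have h1 := (memN 1).1 this
        simp at h1
      · intro b hb
        obtain ⟨p, hpb, hpN⟩ := SetLike.exists_of_lt hb
        obtain ⟨f, rfl⟩ := Ideal.Quotient.mk_surjective p
        have hf0 : constantCoeff (σ := Fin 2) (R := k) f ≠ 0 := fun h => hpN ((memN f).2 h)
        obtain ⟨c, hc⟩ := exists_normal_form f
        have hsplit : Ideal.Quotient.mk (stringIdeal k) f =
            Ideal.Quotient.mk (stringIdeal k) (C (σ := Fin 2) (R := k) (constantCoeff (σ := Fin 2) (R := k) f)) +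
            Ideal.Quotient.mk (stringIdeal k) (C (σ := Fin 2) (R := k) c * X 0) := by
          rw [← map_add, Ideal.Quotient.eq]
          convert hc using 1
          ring
        have hcxb : Ideal.Quotient.mk (stringIdeal k) (C (σ := Fin 2) (R := k) c * X 0) ∈ b := by
          apply hb.le
          rw [memN]
          simp
        have hconstb : Ideal.Quotient.mk (stringIdeal k)
            (C (σ := Fin 2) (R := k) (constantCoeff (σ := Fin 2) (R := k) f)) ∈ b := by
          have := Submodule.sub_mem b hpb hcxb
          rwa [hsplit, add_sub_cancel_right] at this
        have honeb : Ideal.Quotient.mk (stringIdeal k) (1 : MvPowerSeries (Fin 2) k) ∈ b := by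
          have : Ideal.Quotient.mk (nodalIdeal k) (C (σ := Fin 2) (R := k) (constantCoeff (σ := Fin 2) (R := k) f)⁻¹) •
              Ideal.Quotient.mk (stringIdeal k) (C (σ := Fin 2) (R := k) (constantCoeff (σ := Fin 2) (R := k) f)) =
              Ideal.Quotient.mk (stringIdeal k) (1 : MvPowerSeries (Fin 2) k) := by
            rw [mk_smul_mk, ← map_mul, inv_mul_cancel₀ hf0, map_one]
          rw [← this]
          exact Submodule.smul_mem _ _ hconstb
        rw [Submodule.eq_top_iff']
        intro m
        obtain ⟨g, rfl⟩ := Ideal.Quotient.mk_surjective m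
        have : Ideal.Quotient.mk (nodalIdeal k) g •
            Ideal.Quotient.mk (stringIdeal k) (1 : MvPowerSeries (Fin 2) k) =
            Ideal.Quotient.mk (stringIdeal k) g := by
          rw [mk_smul_mk, mul_one]
        rw [← this]
        exact Submodule.smul_mem _ _ honeb
    exact ⟨N, isSimpleModule_iff_isAtom.2 hatom, isSimpleModule_iff_isCoatom.2 hcoatom⟩
end
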